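/- arXiv:2005.13767 — 3 statements merged into one kernel-verified Lean document; each statement's English description precedes it below -/
import Mathlib

section
/- A non-separable Lindelöf Hausdorff topological group in which {1} is a Gδ-set (i.e., of countable pseudocharacter) does not have a suitable set. -/
/-!
If `S` is a suitable set, then `S` is countable: writing `{1} = ⋂ Uₙ` with `Uₙ` open, every
`S \ Uₙ = (S ∪ {1}) \ Uₙ` is closed and discrete, hence countable in a Lindelöf space. So the
subgroup generated by `S` is a countable dense set.
-/

/-- A subset `S` of a topological group `G` is a *suitable set* for `G` if `S` is
discrete in its subspace topology, `S ∪ {1}` is closed in `G`, and the subgroup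
generated by `S` is topologically dense in `G`. -/
def IsSuitable {G : Type*} [Group G] [TopologicalSpace G] (S : Set G) : Prop :=
  DiscreteTopology S ∧ IsClosed (S ∪ {1}) ∧ Dense (Subgroup.closure S : Set G)

open Set

theorem Set.Countable.subgroupClosure {G : Type*} [Group G] {S : Set G} (hS : S.Countable) :
    (Subgroup.closure S : Set G).Countable := by
  have : Countable S := hS.to_subtype
  have : Countable (FreeGroup S) := by unfold FreeGroup; infer_instance
  rw [FreeGroup.closure_eq_range, MonoidHom.coe_range]
  exact countable_range _

theorem IsGδ.countable_of_isClosed_union {X : Type*} [TopologicalSpace X] [LindelofSpace X]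
    {S : Set X} {x : X} (hx : IsGδ {x}) (hdisc : DiscreteTopology S)
    (hclosed : IsClosed (S ∪ {x})) : S.Countable := by
  obtain ⟨U, hUo, hU⟩ := hx.eq_iInter_nat
  have hxU : ∀ n, x ∈ U n := mem_iInter.1 (hU ▸ rfl)
  have hpiece : ∀ n, (S \ U n).Countable := fun n => by
    have hcl : IsClosed (S \ U n) := by
      rw [show S \ U n = (S ∪ {x}) \ U n by simp [hxU n]]
      exact hclosed.sdiff (hUo n)
    exact hcl.isLindelof.countable (hdisc.of_subset sdiff_subset)
  have hcover : S ⊆ insert x (⋃ n, S \ U n) := by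
    intro y hy
    rcases eq_or_ne y x with rfl | hyx
    · exact mem_insert _ _
    · have : y ∉ ⋂ n, U n := hU ▸ hyx
      obtain ⟨n, hn⟩ := by simpa using this
      exact mem_insert_of_mem _ (mem_iUnion.2 ⟨n, hy, hn⟩)
  exact ((countable_iUnion hpiece).insert x).mono hcover

theorem no_suitable_set_of_nonseparable_lindelof_general
    {G : Type*} [Group G] [TopologicalSpace G]
    [LindelofSpace G] (hGδ : IsGδ ({1} : Set G))
    (hns : ¬ TopologicalSpace.SeparableSpace G) :
    ¬ ∃ S : Set G, IsSuitable S := by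
  rintro ⟨S, hdisc, hclosed, hdense⟩
  have hS : S.Countable := hGδ.countable_of_isClosed_union hdisc hclosed
  exact hns ⟨⟨_, hS.subgroupClosure, hdense⟩⟩

/-- A non-separable Lindelöf Hausdorff topological group of countable
pseudocharacter (`{1}` is a Gδ-set) does not have a suitable set. -/
theorem no_suitable_set_of_nonseparable_lindelof
    {G : Type*} [Group G] [TopologicalSpace G] [IsTopologicalGroup G] [T2Space G]
    [LindelofSpace G] (hGδ : IsGδ ({1} : Set G))
    (hns : ¬ TopologicalSpace.SeparableSpace G) :
    ¬ ∃ S : Set G, IsSuitable S :=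
  no_suitable_set_of_nonseparable_lindelof_general hGδ hns
end

section
/- Every pseudocompact topological group G is left precompact: for every neighborhood U of the identity there is a finite subset F of G with F·U = G. -/
/-!
If finitely many translates of `U` never cover `G`, there are points `x₀, x₁, …` with
`xₘ⁻¹ xₙ ∉ U` for `m < n`. For an open `V ∋ 1` with `V / V * (V / V) ⊆ U`, any `g • V` meets at
most one `xₙ • V`, so these translates form a locally finite family of nonempty open sets. A
topological group is completely regular, so there are bumps `φₙ ≥ 0` supported in `xₙ • V` with
`φₙ xₙ = 1`, and `∑ n φₙ` is a continuous function that is unbounded.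
-/

open Pointwise
open Set Function

section CompletelyRegular

variable {X : Type*} [TopologicalSpace X] [CompletelyRegularSpace X]

theorem CompletelyRegularSpace.exists_continuous_nonneg_support_subset
    {W : Set X} (hW : IsOpen W) {x : X} (hx : x ∈ W) :
    ∃ φ : X → ℝ, Continuous φ ∧ (∀ y, 0 ≤ φ y) ∧ φ x = 1 ∧ support φ ⊆ W := by
  obtain ⟨f, hf, hfx, hfW⟩ := CompletelyRegularSpace.completely_regular_isOpen x W hW hx
  refine ⟨fun y => 1 - f y, continuous_const.sub (continuous_subtype_val.comp hf),
    fun y => sub_nonneg.2 (f y).2.2, by simp [hfx], fun y hy => ?_⟩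
  by_contra hyW
  exact hy (by simp [hfW hyW])

theorem not_locallyFinite_nat_of_forall_bounded
    (hbdd : ∀ f : X → ℝ, Continuous f → ∃ M : ℝ, ∀ x, |f x| ≤ M)
    {W : ℕ → Set X} (hWo : ∀ n, IsOpen (W n)) (hWne : ∀ n, (W n).Nonempty) :
    ¬ LocallyFinite W := by
  intro hlf
  choose x hx using hWne
  choose φ hφc hφ0 hφx hφW using fun n =>
    CompletelyRegularSpace.exists_continuous_nonneg_support_subset (hWo n) (hx n)
  have hsupp : LocallyFinite fun n => support fun y => n * φ n y :=
    hlf.subset fun n => (support_mul_subset_right _ _).trans (hφW n)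
  obtain ⟨M, hM⟩ := hbdd (fun y => ∑ᶠ m : ℕ, m * φ m y)
    (continuous_finsum (fun n => continuous_const.mul (hφc n)) hsupp)
  obtain ⟨n, hn⟩ := exists_nat_gt M
  have : (n : ℝ) ≤ ∑ᶠ m : ℕ, m * φ m (x n) := by
    simpa [hφx] using single_le_finsum n (hsupp.point_finite (x n))
      fun m => mul_nonneg m.cast_nonneg (hφ0 m _)
  linarith [le_abs_self (∑ᶠ m : ℕ, m * φ m (x n)), hM (x n)]

theorem finite_of_locallyFinite_of_forall_bounded
    (hbdd : ∀ f : X → ℝ, Continuous f → ∃ M : ℝ, ∀ x, |f x| ≤ M)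
    {ι : Type*} {W : ι → Set X} (hWo : ∀ i, IsOpen (W i)) (hWne : ∀ i, (W i).Nonempty)
    (hlf : LocallyFinite W) : Finite ι := by
  by_contra hι
  rw [not_finite_iff_infinite] at hι
  let e := Infinite.natEmbedding ι
  exact not_locallyFinite_nat_of_forall_bounded hbdd (fun n => hWo (e n)) (fun n => hWne (e n))
    (hlf.comp_injective e.injective)

end CompletelyRegular

section Group

variable {G : Type*} [Group G]

theorem inv_mul_mem_div_of_smul_inter_nonempty {V : Set G} {a b : G}
    (h : (a • V ∩ b • V).Nonempty) : a⁻¹ * b ∈ V / V := by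
  obtain ⟨_, ⟨v, hv, rfl⟩, w, hw, hwv⟩ := h
  refine ⟨v, hv, w, hw, ?_⟩
  simp only [smul_eq_mul] at hwv ⊢
  rw [div_eq_iff_eq_mul, mul_assoc, eq_inv_mul_iff_mul_eq, hwv]

theorem exists_seq_forall_lt_inv_mul_notMem {U : Set G}
    (hU : ∀ F : Set G, F.Finite → F * U ≠ univ) :
    ∃ x : ℕ → G, ∀ m n, m < n → (x m)⁻¹ * x n ∉ U := by
  obtain ⟨x, -, hx⟩ := exists_seq_of_forall_finset_exists (fun _ => True)
    (fun a b => a⁻¹ * b ∉ U) fun s _ => by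
      obtain ⟨y, hy⟩ := (ne_univ_iff_exists_notMem _).1 (hU s s.finite_toSet)
      exact ⟨y, trivial, fun a ha hay => hy ⟨a, ha, _, hay, mul_inv_cancel_left a y⟩⟩
  exact ⟨x, hx⟩

variable [TopologicalSpace G] [IsTopologicalGroup G]

theorem IsTopologicalGroup.completelyRegularSpace : CompletelyRegularSpace G :=
  letI := IsTopologicalGroup.rightUniformSpace G
  inferInstance

theorem exists_open_nhds_one_div_mul_div_subset {U : Set G} (hU : U ∈ nhds 1) :
    ∃ V : Set G, IsOpen V ∧ (1 : G) ∈ V ∧ V / V * (V / V) ⊆ U := by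
  obtain ⟨W, hWo, hW1, hWU⟩ := exists_open_nhds_one_mul_subset hU
  obtain ⟨V, hV, hVW⟩ := exists_nhds_split_inv (hWo.mem_nhds hW1)
  have hdiv : interior V / interior V ⊆ W :=
    div_subset_iff.2 fun a ha b hb => hVW a (interior_subset ha) b (interior_subset hb)
  exact ⟨interior V, isOpen_interior, mem_interior_iff_mem_nhds.2 hV,
    (mul_subset_mul hdiv hdiv).trans hWU⟩

theorem locallyFinite_smul_of_forall_lt_inv_mul_notMem {U V : Set G} (hV : V ∈ nhds 1)
    (hVU : V / V * (V / V) ⊆ U) {x : ℕ → G} (hx : ∀ m n, m < n → (x m)⁻¹ * x n ∉ U) :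
    LocallyFinite fun n => x n • V := by
  intro g
  refine ⟨g • V, smul_mem_nhds_self.2 hV, Subsingleton.finite fun m hm n hn => ?_⟩
  have inv_mul_mem : ∀ m n, (x m • V ∩ g • V).Nonempty → (x n • V ∩ g • V).Nonempty →
      (x m)⁻¹ * x n ∈ U := fun m n hm hn => by
    have h := mul_mem_mul (inv_mul_mem_div_of_smul_inter_nonempty hm)
      (inv_mul_mem_div_of_smul_inter_nonempty (inter_comm _ _ ▸ hn))
    simpa [mul_assoc] using hVU h
  rcases lt_trichotomy m n with hmn | rfl | hnm
  · exact absurd (inv_mul_mem m n hm hn) (hx m n hmn)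
  · rfl
  · exact absurd (inv_mul_mem n m hn hm) (hx n m hnm)

end Group

/-- Every pseudocompact topological group (every continuous real-valued function
is bounded) is left precompact: for every neighborhood `U` of the identity there
is a finite set `F` with `F·U = G`. -/
theorem leftPrecompact_of_pseudocompact
    {G : Type*} [Group G] [TopologicalSpace G] [IsTopologicalGroup G]
    (hpc : ∀ f : G → ℝ, Continuous f → ∃ M : ℝ, ∀ x : G, |f x| ≤ M) :
    ∀ U ∈ nhds (1 : G), ∃ F : Set G, F.Finite ∧ F * U = Set.univ := by
  intro U hU
  by_contra! hcover
  obtain ⟨x, hx⟩ := exists_seq_forall_lt_inv_mul_notMem hcover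
  obtain ⟨V, hVo, hV1, hVU⟩ := exists_open_nhds_one_div_mul_div_subset hU
  have := IsTopologicalGroup.completelyRegularSpace (G := G)
  have : Finite ℕ := finite_of_locallyFinite_of_forall_bounded hpc (fun n => hVo.smul (x n))
    (fun n => ⟨_, smul_mem_smul_set hV1⟩)
    (locallyFinite_smul_of_forall_lt_inv_mul_notMem (hVo.mem_nhds hV1) hVU hx)
  exact not_finite ℕ
end

section
/- Every separable Hausdorff topological group G that is not pseudocompact has a closed suitable set; that is, there exists a subset S of G such that S is closed in G, S is discrete in its subspace topology, and the subgroup generated by S is dense in G. -/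
/-!
Let `f` be an unbounded continuous function on `G` and `Oₙ = {n < |f|}`; the subgroups
`Hₙ = ⟨Oₙ⟩` are open. Enumerate a countable dense set as `d₀, d₁, …`; it suffices to find
a set `S` meeting some neighbourhood of every point in a finite set with all `dₙ ∈ ⟨S⟩`.

If every `Hₙ` has finite index, finitely many elements of `Oₙ` generate `Hₙ` modulo `Hₙ₊₁`,
so `G = Γ Hₙ` for all `n`, where `Γ` is generated by a set meeting each `{|f| ≤ n}` finitely.
Writing `dₙ = γ ν` with `ν ∈ Hₙ` and adding the finitely many letters of `ν` keeps `S`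
escaping to infinity along `|f|`.

If some `H = Hₙ` has infinite index, B. H. Neumann's lemma says that `G` is not covered by
finitely many cosets of `H` and of its conjugates, so one can choose `xₙ` such that
`xₙ` and `xₙ dₙ` lie in cosets of `H` that are not hit by the earlier choices. Then
`S = {xₙ, xₙ dₙ | n ∈ ℕ}` meets every (open) coset of `H` in a finite set.
-/

open Set Filter Topology Pointwise

theorem exists_seq_of_forall_finset_exists_of_nat {α : Type*} (P : ℕ → α → Prop)
    (r : α → α → Prop) (h : ∀ (n : ℕ) (s : Finset α), ∃ y, P n y ∧ ∀ x ∈ s, r x y) :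
    ∃ f : ℕ → α, (∀ n, P n (f n)) ∧ ∀ m n, m < n → r (f m) (f n) := by
  classical
  choose g hgP hgr using h
  let A : ℕ → Finset α := fun n => Nat.rec ∅ (fun k s => insert (g k s) s) n
  have hA : Monotone A := monotone_nat_of_le_succ fun _ => Finset.subset_insert _ _
  exact ⟨fun n => g n (A n), fun n => hgP _ _,
    fun m n hmn => hgr _ _ _ (hA hmn (Finset.mem_insert_self _ _))⟩

theorem isClosed_and_discreteTopology_of_finite_inter_nhds {X : Type*} [TopologicalSpace X]
    [T1Space X] {S : Set X} (h : ∀ x, ∃ U ∈ 𝓝 x, (S ∩ U).Finite) :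
    IsClosed S ∧ DiscreteTopology S := by
  rw [← isDiscrete_iff_discreteTopology, isClosed_and_discrete_iff]
  intro x
  obtain ⟨U, hU, hfin⟩ := h x
  have hnhds : ((S ∩ U) \ {x})ᶜ ∈ 𝓝 x := hfin.sdiff.isClosed.compl_mem_nhds (by simp)
  rw [disjoint_principal_right]
  filter_upwards [nhdsWithin_le_nhds (inter_mem hU hnhds), self_mem_nhdsWithin]
    with y ⟨hyU, hy⟩ hyx hyS
  exact hy ⟨⟨hyS, hyU⟩, hyx⟩

namespace Subgroup

variable {G : Type*} [Group G]

theorem exists_finite_subset_of_mem_closure {T : Set G} {x : G} (hx : x ∈ closure T) :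
    ∃ Φ ⊆ T, Φ.Finite ∧ x ∈ closure Φ := by
  induction hx using closure_induction with
  | mem x hx => exact ⟨{x}, singleton_subset_iff.2 hx, finite_singleton x, subset_closure rfl⟩
  | one => exact ⟨∅, empty_subset T, finite_empty, one_mem _⟩
  | mul x y _ _ hx hy =>
    obtain ⟨Φ, hΦT, hΦ, hxΦ⟩ := hx
    obtain ⟨Ψ, hΨT, hΨ, hyΨ⟩ := hy
    exact ⟨Φ ∪ Ψ, union_subset hΦT hΨT, hΦ.union hΨ,
      mul_mem (closure_mono subset_union_left hxΦ) (closure_mono subset_union_right hyΨ)⟩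
  | inv x _ hx =>
    obtain ⟨Φ, hΦT, hΦ, hxΦ⟩ := hx
    exact ⟨Φ, hΦT, hΦ, inv_mem hxΦ⟩

theorem exists_finite_subset_subset_closure {T Y : Set G} (hY : Y.Finite)
    (hYT : Y ⊆ closure T) : ∃ Φ ⊆ T, Φ.Finite ∧ Y ⊆ closure Φ := by
  choose! Φ hΦT hΦ hyΦ using fun y (hy : y ∈ closure T) => exists_finite_subset_of_mem_closure hy
  refine ⟨⋃ y ∈ Y, Φ y, iUnion₂_subset fun y hy => hΦT y (hYT hy),
    hY.biUnion fun y hy => hΦ y (hYT hy), fun y hy => ?_⟩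
  exact closure_mono (subset_biUnion_of_mem hy) (hyΦ y (hYT hy))

theorem exists_finite_subset_subset_mul_of_finiteIndex (K : Subgroup G) [K.FiniteIndex]
    (A : Set G) : ∃ Y ⊆ A, Y.Finite ∧ A ⊆ Y * K := by
  obtain ⟨Y, hYA, hY, himage⟩ := exists_subset_image_finite_and.1
    ⟨_, Subset.rfl, toFinite (((↑) : G → G ⧸ K) '' A), rfl⟩
  refine ⟨Y, hYA, hY, fun a ha => ?_⟩
  obtain ⟨y, hy, hya⟩ : ((a : G ⧸ K)) ∈ ((↑) : G → G ⧸ K) '' Y := himage ▸ mem_image_of_mem _ ha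
  exact ⟨y, hy, y⁻¹ * a, QuotientGroup.eq.1 hya, mul_inv_cancel_left y a⟩

theorem exists_finite_subset_closure_subset_mul_of_finiteIndex (K : Subgroup G)
    [K.FiniteIndex] (T : Set G) :
    ∃ Φ ⊆ T, Φ.Finite ∧ (closure T : Set G) ⊆ closure Φ * K := by
  obtain ⟨Y, hYT, hY, hTY⟩ := exists_finite_subset_subset_mul_of_finiteIndex K (closure T)
  obtain ⟨Φ, hΦT, hΦ, hYΦ⟩ := exists_finite_subset_subset_closure hY hYT
  exact ⟨Φ, hΦT, hΦ, hTY.trans (mul_subset_mul_right hYΦ)⟩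

theorem exists_forall_mem_closure_finite_diff_of_finiteIndex {O : ℕ → Set G} (hO : Antitone O)
    (hfi : ∀ n, (closure (O n)).FiniteIndex) (d : ℕ → G) :
    ∃ S : Set G, (∀ n, (S \ O n).Finite) ∧ ∀ n, d n ∈ closure S := by
  obtain ⟨Φ₀, -, hΦ₀, hcover₀⟩ :=
    exists_finite_subset_subset_mul_of_finiteIndex (closure (O 0)) univ
  choose Φ hΦO hΦ hcover using fun n =>
    exists_finite_subset_closure_subset_mul_of_finiteIndex (closure (O (n + 1))) (O n)
  set Γ := closure (Φ₀ ∪ ⋃ n, Φ n)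
  have hΦΓ (n : ℕ) : (closure (Φ n) : Set G) ⊆ Γ :=
    closure_mono (subset_union_of_subset_right (subset_iUnion Φ n) _)
  have hΓ (n : ℕ) : univ ⊆ (Γ : Set G) * (closure (O n) : Set G) := by
    induction n with
    | zero => exact hcover₀.trans (mul_subset_mul_right (subset_closure.trans
        (closure_mono subset_union_left)))
    | succ n ih =>
      calc univ ⊆ (Γ : Set G) * (closure (O n) : Set G) := ih
        _ ⊆ Γ * ((closure (Φ n) : Set G) * closure (O (n + 1))) :=
          mul_subset_mul_left (hcover n)
        _ = Γ * (closure (Φ n) : Set G) * closure (O (n + 1)) := (mul_assoc _ _ _).symm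
        _ ⊆ Γ * (closure (O (n + 1)) : Set G) :=
          mul_subset_mul_right (mul_subset subset_rfl (hΦΓ n))
  have hletters (n : ℕ) : ∃ Λ ⊆ O n, Λ.Finite ∧ d n ∈ (Γ : Set G) * closure Λ := by
    obtain ⟨γ, hγ, ν, hν, hd⟩ := hΓ n (mem_univ (d n))
    obtain ⟨Λ, hΛO, hΛ, hνΛ⟩ := exists_finite_subset_of_mem_closure hν
    exact ⟨Λ, hΛO, hΛ, γ, hγ, ν, hνΛ, hd⟩
  choose Λ hΛO hΛ hdΛ using hletters
  refine ⟨Φ₀ ∪ ⋃ n, (Φ n ∪ Λ n), fun n => ?_, fun n => ?_⟩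
  · refine (hΦ₀.union ((finite_Iio n).biUnion fun k _ => (hΦ k).union (hΛ k))).subset ?_
    rintro x ⟨hx | hx, hxO⟩
    · exact Or.inl hx
    obtain ⟨k, hxk⟩ := mem_iUnion.1 hx
    have hkn : k < n := lt_of_not_ge fun hnk =>
      hxO (hO hnk (union_subset (hΦO k) (hΛO k) hxk))
    exact Or.inr (mem_biUnion hkn hxk)
  · refine mul_subset (closure_mono ?_) (closure_mono ?_) (hdΛ n)
    · exact union_subset_union_right _ (iUnion_mono fun k => subset_union_left)
    · exact subset_union_of_subset_right
        (subset_union_right.trans (subset_iUnion (fun k => Φ k ∪ Λ k) n)) _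

theorem exists_notMem_mul_and_mul_notMem_mul {H : Subgroup G} (hH : ¬ H.FiniteIndex)
    (T : Finset G) (δ : G) : ∃ z, z ∉ (T : Set G) * H ∧ z * δ ∉ (T : Set G) * H := by
  by_contra! hcover
  -- `z * δ ∈ t • H` iff `z ∈ (t * δ⁻¹) • (δ H δ⁻¹)`, a coset of a subgroup of infinite index.
  let K : Bool → Subgroup G := fun b => if b then H else H.map (MulAut.conj δ).toMonoidHom
  let g : G × Bool → G := fun i => if i.2 then i.1 else i.1 * δ⁻¹
  have hcosets : ⋃ i ∈ T ×ˢ Finset.univ, g i • (K i.2 : Set G) = univ := by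
    refine eq_univ_of_forall fun z => mem_iUnion₂.2 ?_
    by_cases hz : z ∈ (T : Set G) * H
    · obtain ⟨t, ht, h, hh, rfl⟩ := hz
      exact ⟨(t, true), by simpa using ht, mem_leftCoset t hh⟩
    · obtain ⟨t, ht, h, hh, hzδ⟩ := hcover z hz
      refine ⟨(t, false), by simpa using ht, (t * δ⁻¹)⁻¹ * z, ?_, mul_inv_cancel_left _ _⟩
      refine ⟨h, hh, ?_⟩
      simp only [MulEquiv.coe_toMonoidHom, MulAut.conj_apply]
      rw [eq_mul_inv_iff_mul_eq.2 hzδ]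
      group
  obtain ⟨⟨t, b⟩, -, hfin⟩ := exists_finiteIndex_of_leftCoset_cover hcosets
  cases b with
  | true => exact hH hfin
  | false => exact hH ⟨(index_map_equiv H (MulAut.conj δ)) ▸ hfin.index_ne_zero⟩

theorem finite_iUnion_inter_leftCoset {H : Subgroup G} {T : ℕ → Set G}
    (hT : ∀ n, (T n).Finite) (hsep : ∀ m n, m < n → ∀ a ∈ T n, a ∉ T m * H) (g : G) :
    ((⋃ n, T n) ∩ g • (H : Set G)).Finite := by
  have hcoset {a b : G} {m : ℕ} (ha : a ∈ g • (H : Set G)) (hb : b ∈ g • (H : Set G))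
      (hbm : b ∈ T m) : a ∈ T m * H := by
    refine ⟨b, hbm, b⁻¹ * a, ?_, mul_inv_cancel_left b a⟩
    rw [mem_leftCoset_iff] at ha hb
    simpa [mul_assoc] using mul_mem (inv_mem hb) ha
  by_cases hne : ∃ n, (T n ∩ g • (H : Set G)).Nonempty
  · obtain ⟨n₀, a₀, ha₀, ha₀g⟩ := hne
    refine (hT n₀).subset ?_
    rintro y ⟨hy, hyg⟩
    obtain ⟨n, hyn⟩ := mem_iUnion.1 hy
    rcases lt_trichotomy n n₀ with h | rfl | h
    · exact absurd (hcoset ha₀g hyg hyn) (hsep n n₀ h a₀ ha₀)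
    · exact hyn
    · exact absurd (hcoset hyg ha₀g ha₀) (hsep n₀ n h y hyn)
  · push Not at hne
    simp [iUnion_inter, hne]

theorem exists_forall_mem_closure_finite_inter_leftCoset {H : Subgroup G}
    (hH : ¬ H.FiniteIndex) (d : ℕ → G) :
    ∃ S : Set G, (∀ g : G, (S ∩ g • (H : Set G)).Finite) ∧ ∀ n, d n ∈ closure S := by
  classical
  obtain ⟨T, hTd, hsep⟩ := exists_seq_of_forall_finset_exists_of_nat
    (fun n (T : Finset G) => ∃ x, T = {x, x * d n})
    (fun T T' => ∀ a ∈ T', a ∉ (T : Set G) * H) fun n s => by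
      obtain ⟨z, hz, hzd⟩ := exists_notMem_mul_and_mul_notMem_mul hH (s.biUnion id) (d n)
      refine ⟨{z, z * d n}, ⟨z, rfl⟩, fun T hT a ha => ?_⟩
      have hTs : (T : Set G) * H ⊆ (s.biUnion id : Set G) * H :=
        mul_subset_mul_right (Finset.coe_subset.2 (Finset.subset_biUnion_of_mem id hT))
      rcases Finset.mem_insert.1 ha with rfl | ha
      · exact fun h => hz (hTs h)
      · exact Finset.mem_singleton.1 ha ▸ fun h => hzd (hTs h)
  refine ⟨⋃ n, (T n : Set G), finite_iUnion_inter_leftCoset (fun n => (T n).finite_toSet)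
    hsep, fun n => ?_⟩
  obtain ⟨x, hx⟩ := hTd n
  have hmem {y : G} (hy : y ∈ T n) : y ∈ closure (⋃ n, (T n : Set G)) :=
    subset_closure (mem_iUnion_of_mem n hy)
  simpa using mul_mem (inv_mem (hmem (y := x) (by simp [hx])))
    (hmem (y := x * d n) (by simp [hx]))

end Subgroup

/-- Every separable Hausdorff topological group which is not pseudocompact has a
closed suitable set: a closed, discrete-in-itself subset generating a dense
subgroup. -/
theorem separable_not_pseudocompact_has_closed_suitable_set
    {G : Type*} [Group G] [TopologicalSpace G] [IsTopologicalGroup G] [T2Space G]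
    [TopologicalSpace.SeparableSpace G]
    (hnpc : ¬ ∀ f : G → ℝ, Continuous f → ∃ M : ℝ, ∀ x : G, |f x| ≤ M) :
    ∃ S : Set G, IsClosed S ∧ DiscreteTopology S ∧
      Dense (Subgroup.closure S : Set G) := by
  push Not at hnpc
  obtain ⟨f, hf, hfu⟩ := hnpc
  set O : ℕ → Set G := fun n => {x | (n : ℝ) < |f x|}
  have hO : Antitone O := fun m n hmn x (hx : (n : ℝ) < |f x|) =>
    show (m : ℝ) < |f x| from (Nat.cast_le.2 hmn).trans_lt hx
  obtain ⟨d, hd⟩ := TopologicalSpace.exists_dense_seq G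
  suffices ∃ S : Set G, (∀ g, ∃ U ∈ 𝓝 g, (S ∩ U).Finite) ∧ ∀ n, d n ∈ Subgroup.closure S by
    obtain ⟨S, hS, hdS⟩ := this
    exact ⟨S, isClosed_and_discreteTopology_of_finite_inter_nhds hS |>.1,
      isClosed_and_discreteTopology_of_finite_inter_nhds hS |>.2,
      hd.mono (range_subset_iff.2 hdS)⟩
  by_cases hfi : ∀ n, (Subgroup.closure (O n)).FiniteIndex
  · obtain ⟨S, hSO, hdS⟩ := Subgroup.exists_forall_mem_closure_finite_diff_of_finiteIndex hO hfi d
    refine ⟨S, fun g => ?_, hdS⟩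
    obtain ⟨n, hn⟩ := exists_nat_gt |f g|
    exact ⟨{x | |f x| < n}, (isOpen_lt hf.abs continuous_const).mem_nhds hn,
      (hSO n).subset fun x ⟨hxS, (hx : |f x| < n)⟩ => ⟨hxS, hx.not_gt⟩⟩
  · push Not at hfi
    obtain ⟨n, hn⟩ := hfi
    obtain ⟨x, hx⟩ := hfu n
    have hopen : IsOpen (Subgroup.closure (O n) : Set G) := Subgroup.isOpen_of_mem_nhds _
      (mem_of_superset ((isOpen_lt continuous_const hf.abs).mem_nhds hx) Subgroup.subset_closure)
    obtain ⟨S, hS, hdS⟩ := Subgroup.exists_forall_mem_closure_finite_inter_leftCoset hn d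
    have hg (g : G) : g ∈ g • (Subgroup.closure (O n) : Set G) := by
      simpa using mem_leftCoset g (one_mem (Subgroup.closure (O n)))
    exact ⟨S, fun g => ⟨_, (hopen.leftCoset g).mem_nhds (hg g), hS g⟩, hdS⟩
end
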